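/- For every linear functional χ ∈ L*, the coadjoint stabilizer L_χ = {X ∈ L : χ([X, Y]) = 0 for all Y ∈ L} has dimension at least k. -/

import Mathlib

/-!
The stabilizer `L_χ` is the radical of the alternating form `(X, Y) ↦ χ [X, Y]`. If the form
vanishes on a subspace `A`, then `X ↦ χ [X, -]` maps `A` into the annihilator of `A`, of
dimension `dim L - dim A`; its kernel lies in `L_χ`, so `dim L_χ ≥ 2 dim A - dim L`. For the
algebra at hand, `A = span (x_1, …, x_k, D_0)` is abelian of codimension one, giving `dim L_χ ≥ k`.
-/

universe u v w

open Module

def coadjointStabilizer (𝕜 : Type u) [Field 𝕜] (g : Type v) [LieRing g] [LieAlgebra 𝕜 g]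
    (χ : Module.Dual 𝕜 g) : Submodule 𝕜 g where
  carrier := {X | ∀ Y : g, χ ⁅X, Y⁆ = 0}
  add_mem' := by intro a b ha hb; intro Y; rw [add_lie, map_add, ha Y, hb Y, add_zero]
  zero_mem' := by intro Y; rw [zero_lie, map_zero]
  smul_mem' := by intro c a ha; intro Y; rw [smul_lie, map_smul, ha Y, smul_zero]

/-- `b` is a basis of the Lie algebra `L` of the paper: `Sum.inl i ↦ x_{i+1}`
(for `i : Fin k`), `Sum.inr 0 ↦ D_0`, `Sum.inr 1 ↦ D`, where `D_0` is central, the `x_i`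
commute, `[D, x_i] = x_i` for `i = 1, …, k-2`, `[D, x_{k-1}] = x_k` and `[D, x_k] = 0`. -/
def IsLBasis {𝕜 : Type u} [Field 𝕜] {L : Type v} [LieRing L] [LieAlgebra 𝕜 L]
    {k : ℕ} (b : Basis (Fin k ⊕ Fin 2) 𝕜 L) : Prop :=
  (∀ i j : Fin k, ⁅b (Sum.inl i), b (Sum.inl j)⁆ = 0) ∧
  (∀ v : Fin k ⊕ Fin 2, ⁅b (Sum.inr 0), b v⁆ = 0) ∧
  (∀ i : Fin k, (i : ℕ) < k - 2 → ⁅b (Sum.inr 1), b (Sum.inl i)⁆ = b (Sum.inl i)) ∧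
  (∀ i j : Fin k, (i : ℕ) = k - 2 → (j : ℕ) = k - 1 →
      ⁅b (Sum.inr 1), b (Sum.inl i)⁆ = b (Sum.inl j)) ∧
  (∀ i : Fin k, (i : ℕ) = k - 1 → ⁅b (Sum.inr 1), b (Sum.inl i)⁆ = 0)

section

variable {𝕜 : Type u} [Field 𝕜] {L : Type v} [LieRing L] [LieAlgebra 𝕜 L]

theorem two_mul_finrank_le_finrank_add_finrank_coadjointStabilizer [FiniteDimensional 𝕜 L]
    (χ : Module.Dual 𝕜 L) (A : Submodule 𝕜 L) (hA : ∀ X ∈ A, ∀ Y ∈ A, χ ⁅X, Y⁆ = 0) :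
    2 * finrank 𝕜 A ≤ finrank 𝕜 L + finrank 𝕜 (coadjointStabilizer 𝕜 L χ) := by
  let ψ : A →ₗ[𝕜] Module.Dual 𝕜 L :=
    ((LieModule.toEnd 𝕜 L L : L →ₗ[𝕜] Module.End 𝕜 L).compr₂ χ) ∘ₗ A.subtype
  have h_range : finrank 𝕜 (LinearMap.range ψ) ≤ finrank 𝕜 A.dualAnnihilator := by
    refine Submodule.finrank_mono ?_
    rintro _ ⟨X, rfl⟩
    exact (Submodule.mem_dualAnnihilator _).2 fun Y hY => hA X X.2 Y hY
  have h_ker : finrank 𝕜 (LinearMap.ker ψ) ≤ finrank 𝕜 (coadjointStabilizer 𝕜 L χ) := by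
    rw [← Submodule.finrank_map_subtype_eq]
    refine Submodule.finrank_mono ?_
    rintro _ ⟨X, hX, rfl⟩ Y
    exact LinearMap.congr_fun hX Y
  have := LinearMap.finrank_range_add_finrank_ker ψ
  have := Subspace.finrank_add_finrank_dualAnnihilator_eq A
  omega

theorem lie_eq_zero_of_mem_span {s : Set L} (hs : ∀ x ∈ s, ∀ y ∈ s, ⁅x, y⁆ = 0) {X Y : L}
    (hX : X ∈ Submodule.span 𝕜 s) (hY : Y ∈ Submodule.span 𝕜 s) : ⁅X, Y⁆ = 0 := by
  induction hX using Submodule.span_induction with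
  | mem x hx =>
    induction hY using Submodule.span_induction with
    | mem y hy => exact hs x hx y hy
    | zero => exact lie_zero x
    | add y y' _ _ h h' => rw [lie_add, h, h', add_zero]
    | smul c y _ h => rw [lie_smul, h, smul_zero]
  | zero => exact zero_lie Y
  | add x x' _ _ h h' => rw [add_lie, h, h', add_zero]
  | smul c x _ h => rw [smul_lie, h, smul_zero]

end

theorem stmt5 (k : ℕ)
    (𝕜 : Type u) [Field 𝕜]
    (L : Type v) [LieRing L] [LieAlgebra 𝕜 L]
    (b : Basis (Fin k ⊕ Fin 2) 𝕜 L) (hb : IsLBasis b) :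
    ∀ χ : Module.Dual 𝕜 L, k ≤ Module.finrank 𝕜 (coadjointStabilizer 𝕜 L χ) := by
  obtain ⟨hx_comm, hD₀_central, -, -, -⟩ := hb
  intro χ
  have : FiniteDimensional 𝕜 L := .of_basis b
  let e : Fin k ⊕ Fin 1 → Fin k ⊕ Fin 2 := Sum.map id fun _ => 0
  have he : Function.Injective e :=
    Sum.map_injective.2 ⟨Function.injective_id, Function.injective_of_subsingleton _⟩
  have h_comm : ∀ x ∈ Set.range (b ∘ e), ∀ y ∈ Set.range (b ∘ e), ⁅x, y⁆ = 0 := by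
    rintro _ ⟨i | _, rfl⟩ _ ⟨j | _, rfl⟩
    · exact hx_comm i j
    · rw [← lie_skew]; simp [e, hD₀_central]
    · exact hD₀_central _
    · exact hD₀_central _
  have h_dim : finrank 𝕜 (Submodule.span 𝕜 (Set.range (b ∘ e))) = k + 1 := by
    rw [finrank_span_eq_card (b.linearIndependent.comp e he)]; simp
  have h_total : finrank 𝕜 L = k + 2 := by simp [finrank_eq_card_basis b]
  have := two_mul_finrank_le_finrank_add_finrank_coadjointStabilizer χ _
    fun X hX Y hY => by rw [lie_eq_zero_of_mem_span h_comm hX hY, map_zero]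
  omega
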